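/- The grounded labelling of a finite argumentation framework is the unique argument labelling that is both strongly admissible and complete. -/

import Mathlib

/-!
A strongly admissible labelling lies below every complete labelling, by induction on its
min-max numbering; so one that is also complete lies below the grounded labelling and, by
minimality of the latter, equals it. Conversely, iterating the characteristic function from the
empty labelling reaches a fixed point because the framework is finite, and this fixed point is a
complete labelling. Numbering each argument by the first stage that labels it is a min-max
numbering, so this labelling is strongly admissible as well, hence it is the grounded one.
-/

inductive Label where
  | inn | out | und
deriving DecidableEq

/-- A labelling is admissible if every in-labelled argument has all its attackers
labelled out, and every out-labelled argument has at least one in-labelled attacker. -/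
def Admissible {Ar : Type*} (att : Ar → Ar → Prop) (L : Ar → Label) : Prop :=
  (∀ x, L x = Label.inn → ∀ y, att y x → L y = Label.out) ∧
  (∀ x, L x = Label.out → ∃ y, att y x ∧ L y = Label.inn)

/-- A min-max numbering (with only natural-number values): in-arguments are numbered
1 + max of the numbers of their out-labelled attackers (max ∅ = 0), and out-arguments
1 + min of the numbers of their in-labelled attackers. -/
def IsMinMax {Ar : Type*} (att : Ar → Ar → Prop) (L : Ar → Label) (MM : Ar → ℕ) : Prop :=
  (∀ x, L x = Label.inn → MM x = sSup (MM '' {y | att y x ∧ L y = Label.out}) + 1) ∧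
  (∀ x, L x = Label.out → MM x = sInf (MM '' {y | att y x ∧ L y = Label.inn}) + 1)

/-- Strongly admissible: admissible and admitting a min-max numbering with only
natural-number (finite) values. -/
def StronglyAdmissible {Ar : Type*} (att : Ar → Ar → Prop) (L : Ar → Label) : Prop :=
  Admissible att L ∧ ∃ MM : Ar → ℕ, IsMinMax att L MM

/-- Complete labelling: admissible, and every undec argument has an undec attacker
and no in-labelled attacker. -/
def CompleteLab {Ar : Type*} (att : Ar → Ar → Prop) (L : Ar → Label) : Prop :=
  Admissible att L ∧
  ∀ x, L x = Label.und →
    (∃ y, att y x ∧ L y = Label.und) ∧ ∀ y, att y x → L y ≠ Label.inn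

/-- The order on labellings: Lab1 ⊑ Lab2 iff in(Lab1) ⊆ in(Lab2) and out(Lab1) ⊆ out(Lab2). -/
def LabLe {Ar : Type*} (L1 L2 : Ar → Label) : Prop :=
  (∀ x, L1 x = Label.inn → L2 x = Label.inn) ∧
  (∀ x, L1 x = Label.out → L2 x = Label.out)

section Labellings

variable {Ar : Type*} {att : Ar → Ar → Prop} {L : Ar → Label}

lemma CompleteLab.eq_inn_of_forall_attacker_out (hL : CompleteLab att L) {x : Ar}
    (hx : ∀ y, att y x → L y = .out) : L x = .inn := by
  cases hLx : L x with
  | inn => rfl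
  | out =>
    obtain ⟨y, hyx, hy⟩ := hL.1.2 x hLx
    simp [hx y hyx] at hy
  | und =>
    obtain ⟨y, hyx, hy⟩ := (hL.2 x hLx).1
    simp [hx y hyx] at hy

lemma CompleteLab.eq_out_of_attacker_inn (hL : CompleteLab att L) {x y : Ar} (hyx : att y x)
    (hy : L y = .inn) : L x = .out := by
  cases hLx : L x with
  | inn => simpa [hy] using hL.1.1 x hLx y hyx
  | out => rfl
  | und => exact absurd hy ((hL.2 x hLx).2 y hyx)

lemma LabLe.antisymm {L₁ L₂ : Ar → Label} (h₁₂ : LabLe L₁ L₂) (h₂₁ : LabLe L₂ L₁) :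
    L₁ = L₂ := by
  funext x
  cases h₁ : L₁ x with
  | inn => exact (h₁₂.1 x h₁).symm
  | out => exact (h₁₂.2 x h₁).symm
  | und =>
    cases h₂ : L₂ x with
    | inn => simp [h₂₁.1 x h₂] at h₁
    | out => simp [h₂₁.2 x h₂] at h₁
    | und => rfl

/- Induction on the numbering: an in-argument is out-attacked only by arguments of smaller
number, and an out-argument has an in-attacker of smaller number. -/
lemma StronglyAdmissible.labLe_of_completeLab [Finite Ar] {L C : Ar → Label}
    (hL : StronglyAdmissible att L) (hC : CompleteLab att C) : LabLe L C := by
  obtain ⟨hadm, MM, hMM⟩ := hL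
  suffices key : ∀ n x, MM x = n →
      (L x = .inn → C x = .inn) ∧ (L x = .out → C x = .out) from
    ⟨fun x => (key _ x rfl).1, fun x => (key _ x rfl).2⟩
  intro n
  induction n using Nat.strong_induction_on with
  | _ n ih =>
    rintro x rfl
    constructor
    · intro hx
      refine hC.eq_inn_of_forall_attacker_out fun y hyx => ?_
      have hy : L y = .out := hadm.1 x hx y hyx
      have hlt : MM y < MM x := by
        have := le_csSup (Set.toFinite (MM '' {z | att z x ∧ L z = .out})).bddAbove
          ⟨y, ⟨hyx, hy⟩, rfl⟩
        rw [hMM.1 x hx]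
        omega
      exact (ih _ hlt y rfl).2 hy
    · intro hx
      obtain ⟨y, hyx, hy⟩ := hadm.2 x hx
      obtain ⟨z, ⟨hzx, hz⟩, hzmin⟩ :=
        Nat.sInf_mem (⟨_, ⟨y, ⟨hyx, hy⟩, rfl⟩⟩ : (MM '' {z | att z x ∧ L z = .inn}).Nonempty)
      have hlt : MM z < MM x := by
        rw [hMM.2 x hx, hzmin]
        omega
      exact hC.eq_out_of_attacker_inn hzx ((ih _ hlt z rfl).1 hz)

end Labellings

namespace Argumentation

variable {Ar : Type*} (att : Ar → Ar → Prop)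

/-- The characteristic function of `att`, acting on pairs `(in, out)` of sets of arguments. -/
def step : Set Ar × Set Ar →o Set Ar × Set Ar where
  toFun p := ({x | ∀ y, att y x → y ∈ p.2}, {x | ∃ y ∈ p.1, att y x})
  monotone' _ _ h :=
    ⟨fun _ hx y hyx => h.2 (hx y hyx), fun _ ⟨y, hy, hyx⟩ => ⟨y, h.1 hy, hyx⟩⟩

def stage (n : ℕ) : Set Ar × Set Ar := (step att)^[n] ⊥

lemma stage_succ (n : ℕ) : stage att (n + 1) = step att (stage att n) :=
  Function.iterate_succ_apply' _ _ _

lemma monotone_stage : Monotone (stage att) :=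
  (step att).monotone.monotone_iterate_of_le_map bot_le

lemma disjoint_stage (n : ℕ) : Disjoint (stage att n).1 (stage att n).2 := by
  induction n with
  | zero => exact disjoint_bot_left
  | succ n ih =>
    rw [stage_succ]
    refine Set.disjoint_left.2 fun x hin ⟨y, hy, hyx⟩ => ?_
    exact Set.disjoint_left.1 ih hy (hin y hyx)

lemma exists_step_stage_eq [Finite Ar] : ∃ N, step att (stage att N) = stage att N := by
  obtain ⟨N, hN⟩ := WellFoundedGT.monotone_chain_condition ⟨stage att, monotone_stage att⟩
  exact ⟨N, by simpa [stage_succ] using (hN (N + 1) N.le_succ).symm⟩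

open Classical in
noncomputable def toLabelling (p : Set Ar × Set Ar) : Ar → Label := fun x =>
  if x ∈ p.1 then .inn else if x ∈ p.2 then .out else .und

-- `sInf ∅ = 0`: arguments that no stage labels get rank `0`.
noncomputable def rank (x : Ar) : ℕ := sInf {n | x ∈ (stage att n).1 ∪ (stage att n).2}

variable {att} {p : Set Ar × Set Ar} {x : Ar} {n : ℕ}

lemma toLabelling_eq_inn_iff : toLabelling p x = .inn ↔ x ∈ p.1 := by
  unfold toLabelling; split_ifs <;> simp_all

lemma toLabelling_eq_out_iff (hp : Disjoint p.1 p.2) : toLabelling p x = .out ↔ x ∈ p.2 := by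
  unfold toLabelling
  split_ifs with h₁ h₂
  · simp [Set.disjoint_left.1 hp h₁]
  · simp [h₂]
  · simp [h₂]

lemma toLabelling_eq_und_iff : toLabelling p x = .und ↔ x ∉ p.1 ∧ x ∉ p.2 := by
  unfold toLabelling; split_ifs <;> simp_all

lemma completeLab_toLabelling (hp : Disjoint p.1 p.2) (hfix : step att p = p) :
    CompleteLab att (toLabelling p) := by
  have hin : p.1 = {x | ∀ y, att y x → y ∈ p.2} := congrArg Prod.fst hfix.symm
  have hout : p.2 = {x | ∃ y ∈ p.1, att y x} := congrArg Prod.snd hfix.symm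
  simp only [CompleteLab, Admissible, toLabelling_eq_inn_iff, toLabelling_eq_out_iff hp,
    toLabelling_eq_und_iff]
  refine ⟨⟨fun x hx => ?_, fun x hx => ?_⟩, fun x ⟨hx₁, hx₂⟩ => ⟨?_, ?_⟩⟩
  · rw [hin] at hx; exact hx
  · rw [hout] at hx
    obtain ⟨y, hy, hyx⟩ := hx
    exact ⟨y, hyx, hy⟩
  · rw [hin] at hx₁
    obtain ⟨y, hyx, hy₂⟩ : ∃ y, att y x ∧ y ∉ p.2 := by simpa using hx₁
    exact ⟨y, hyx, fun hy₁ => hx₂ (hout ▸ ⟨y, hy₁, hyx⟩), hy₂⟩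
  · intro y hyx hy₁
    rw [toLabelling_eq_inn_iff] at hy₁
    exact hx₂ (hout ▸ ⟨y, hy₁, hyx⟩)

lemma rank_le (h : x ∈ (stage att n).1 ∪ (stage att n).2) : rank att x ≤ n :=
  Nat.sInf_le h

lemma rank_mem (h : x ∈ (stage att n).1 ∪ (stage att n).2) :
    x ∈ (stage att (rank att x)).1 ∪ (stage att (rank att x)).2 :=
  Nat.sInf_mem (s := {k | x ∈ (stage att k).1 ∪ (stage att k).2}) ⟨n, h⟩

lemma rank_ne_zero (h : x ∈ (stage att n).1 ∪ (stage att n).2) : rank att x ≠ 0 := fun h₀ => by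
  simpa [h₀, stage] using rank_mem h

lemma mem_stage_rank_fst (h : x ∈ (stage att n).1) : x ∈ (stage att (rank att x)).1 := by
  refine (rank_mem (Or.inl h)).resolve_right fun hout => ?_
  exact Set.disjoint_left.1 (disjoint_stage att n) h
    ((monotone_stage att (rank_le (Or.inl h))).2 hout)

lemma mem_stage_rank_snd (h : x ∈ (stage att n).2) : x ∈ (stage att (rank att x)).2 := by
  refine (rank_mem (Or.inr h)).resolve_left fun hin => ?_
  exact Set.disjoint_left.1 (disjoint_stage att n)
    ((monotone_stage att (rank_le (Or.inr h))).1 hin) h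

lemma rank_eq_sSup_add_one (hx : x ∈ (stage att n).1) :
    rank att x = sSup (rank att '' {y | att y x ∧ toLabelling (stage att n) y = .out}) + 1 := by
  obtain ⟨m, hm⟩ := Nat.exists_eq_add_one_of_ne_zero (rank_ne_zero (Or.inl hx))
  have hmn : m + 1 ≤ n := hm ▸ rank_le (Or.inl hx)
  have hxm : ∀ y, att y x → y ∈ (stage att m).2 := by
    have h := mem_stage_rank_fst hx
    rw [hm, stage_succ] at h
    exact h
  set S := rank att '' {y | att y x ∧ toLabelling (stage att n) y = .out}
  have hbdd : m ∈ upperBounds S := by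
    rintro _ ⟨y, ⟨hyx, -⟩, rfl⟩
    exact rank_le (Or.inr (hxm y hyx))
  -- every attacker is already out at stage `sSup S`, so `x` is in one stage later
  have hx' : x ∈ (stage att (sSup S + 1)).1 := by
    rw [stage_succ]
    intro y hyx
    have hyn : y ∈ (stage att n).2 := (monotone_stage att (by omega : m ≤ n)).2 (hxm y hyx)
    have hyS : rank att y ≤ sSup S :=
      le_csSup ⟨m, hbdd⟩ ⟨y, ⟨hyx, (toLabelling_eq_out_iff (disjoint_stage att n)).2 hyn⟩, rfl⟩
    exact (monotone_stage att hyS).2 (mem_stage_rank_snd hyn)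
  have := rank_le (Or.inl hx')
  have := csSup_le' hbdd
  omega

lemma rank_eq_sInf_add_one (hx : x ∈ (stage att n).2) :
    rank att x = sInf (rank att '' {y | att y x ∧ toLabelling (stage att n) y = .inn}) + 1 := by
  obtain ⟨m, hm⟩ := Nat.exists_eq_add_one_of_ne_zero (rank_ne_zero (Or.inr hx))
  have hmn : m + 1 ≤ n := hm ▸ rank_le (Or.inr hx)
  obtain ⟨y, hy, hyx⟩ : ∃ y ∈ (stage att m).1, att y x := by
    have h := mem_stage_rank_snd hx
    rw [hm, stage_succ] at h
    exact h
  set T := rank att '' {z | att z x ∧ toLabelling (stage att n) z = .inn}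
  have hyT : rank att y ∈ T :=
    ⟨y, ⟨hyx, toLabelling_eq_inn_iff.2 ((monotone_stage att (by omega : m ≤ n)).1 hy)⟩, rfl⟩
  have hT : sInf T ≤ m := (Nat.sInf_le hyT).trans (rank_le (Or.inl hy))
  have hbdd : m ∈ lowerBounds T := by
    rintro _ ⟨z, ⟨hzx, hz⟩, rfl⟩
    have hx' : x ∈ (stage att (rank att z + 1)).2 := by
      rw [stage_succ]
      exact ⟨z, mem_stage_rank_fst (toLabelling_eq_inn_iff.1 hz), hzx⟩
    have := rank_le (Or.inr hx')
    omega
  have := le_csInf ⟨_, hyT⟩ hbdd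
  omega

variable (att)

lemma isMinMax_rank (n : ℕ) : IsMinMax att (toLabelling (stage att n)) (rank att) :=
  ⟨fun _ hx => rank_eq_sSup_add_one (toLabelling_eq_inn_iff.1 hx),
    fun _ hx => rank_eq_sInf_add_one ((toLabelling_eq_out_iff (disjoint_stage att n)).1 hx)⟩

theorem exists_stronglyAdmissible_completeLab [Finite Ar] :
    ∃ L, StronglyAdmissible att L ∧ CompleteLab att L := by
  obtain ⟨N, hN⟩ := exists_step_stage_eq att
  have hC := completeLab_toLabelling (disjoint_stage att N) hN
  exact ⟨_, ⟨hC.1, _, isMinMax_rank att N⟩, hC⟩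

end Argumentation

/-- The grounded labelling of a finite argumentation framework is the
unique argument labelling that is both strongly admissible and complete. -/
theorem grounded_unique_strongly_admissible_complete
    {Ar : Type*} [Fintype Ar] (att : Ar → Ar → Prop) (Lgr : Ar → Label)
    (hgr : CompleteLab att Lgr ∧ ∀ L, CompleteLab att L → LabLe Lgr L) :
    ∀ L : Ar → Label, (StronglyAdmissible att L ∧ CompleteLab att L) ↔ L = Lgr := by
  have eq_grounded : ∀ L, StronglyAdmissible att L → CompleteLab att L → L = Lgr :=
    fun L hSA hC => (hSA.labLe_of_completeLab hgr.1).antisymm (hgr.2 L hC)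
  obtain ⟨L₀, hSA₀, hC₀⟩ := Argumentation.exists_stronglyAdmissible_completeLab att
  intro L
  refine ⟨fun h => eq_grounded L h.1 h.2, ?_⟩
  rintro rfl
  rw [← eq_grounded L₀ hSA₀ hC₀]
  exact ⟨hSA₀, hC₀⟩
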